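/- arXiv:2009.04388 — 4 statements merged into one kernel-verified Lean document; each statement's English description precedes it below -/
import Mathlib

section
/- Let n ≥ 1 be an integer, k ∈ [0,1), λ₀ > 0, R > 0 and q > −1. Then there exists a constant B₀ > 0, depending only on n, λ₀, q, R, k, such that for all t ≥ s ≥ 1 and all x ∈ ℝⁿ with |x| ≤ A_k(s) + R: ξ_q(t,s,x;k) ≥ B₀ ⟨A_k(s)⟩^{−q−1}. -/
open MeasureTheory Real Set

/-- `φ_k(t) = t^(1-k)/(1-k)`. -/
noncomputable def phik (k t : ℝ) : ℝ := t ^ (1 - k) / (1 - k)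

/-- `A_k(t) = φ_k(t) - φ_k(1)`. -/
noncomputable def Ak (k t : ℝ) : ℝ := phik k t - phik k 1

/-- The Yordanov–Zhang function: `cosh x` for `n = 1`, and the integral of `e^(x·ω)`
over the unit sphere (with surface measure) for `n ≥ 2`. -/
noncomputable def YZphi (n : ℕ) (x : EuclideanSpace ℝ (Fin n)) : ℝ :=
  if n = 1 then Real.cosh ‖x‖
  else ∫ ω in Metric.sphere (0 : EuclideanSpace ℝ (Fin n)) 1,
    Real.exp ((inner ℝ x ω : ℝ)) ∂(MeasureTheory.Measure.hausdorffMeasure ((n:ℝ) - 1))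

/-- `sinh y / y`, interpreted as `1` at `y = 0`. -/
noncomputable def sinhc (y : ℝ) : ℝ := if y = 0 then 1 else Real.sinh y / y

/-- The auxiliary function `ξ_q(t,s,x;k)`. -/
noncomputable def xiq (n : ℕ) (lam0 R k q : ℝ) (t s : ℝ) (x : EuclideanSpace ℝ (Fin n)) : ℝ :=
  ∫ lam in (0:ℝ)..lam0,
    Real.exp (-(lam * (Ak k t + R))) * Real.cosh (lam * (phik k t - phik k s)) *
      YZphi n (lam • x) * lam ^ q

/-- The auxiliary function `η_q(t,s,x;k)`. -/
noncomputable def etaq (n : ℕ) (lam0 R k q : ℝ) (t s : ℝ) (x : EuclideanSpace ℝ (Fin n)) : ℝ :=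
  (s * t) ^ (k / 2) *
    ∫ lam in (0:ℝ)..lam0,
      Real.exp (-(lam * (Ak k t + R))) * sinhc (lam * (phik k t - phik k s)) *
        YZphi n (lam • x) * lam ^ q

/-!
Since `cosh z ≥ e^z / 2` and `A_k(t) - (φ_k(t) - φ_k(s)) = A_k(s)`, and since
`φ(y) ≥ c e^{-|y|}` with `c > 0` (for `n ≥ 2`, the `(n-1)`-dimensional Hausdorff measure of the
unit sphere), the integrand of `ξ_q` is at least `(c/2) e^{-2λ(A_k(s)+R)} λ^q` whenever
`|x| ≤ A_k(s) + R`. For `λ ≤ λ₀ / (3 + |A_k(s)|)` the exponential is bounded below by a constant,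
and integrating `λ^q` over this interval produces the factor `(3 + |A_k(s)|)^{-q-1}`.

The unit sphere has positive Hausdorff measure because its orthogonal projection onto a
hyperplane contains a unit ball, and finite measure because it is covered by the images of two
compact balls under the (smooth, hence locally Lipschitz) inverse stereographic projections.
-/

open Module Metric
open scoped ENNReal RealInnerProductSpace

theorem hausdorffMeasure_image_lt_top_of_contDiff {E F : Type*} [NormedAddCommGroup E]
    [NormedSpace ℝ E] [MeasurableSpace E] [BorelSpace E] [NormedAddCommGroup F]
    [NormedSpace ℝ F] [FiniteDimensional ℝ F] [MeasurableSpace F] [BorelSpace F]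
    {f : F → E} (hf : ContDiff ℝ 1 f) {s : Set F} (hs : IsCompact s) :
    μH[finrank ℝ F] (f '' s) < ∞ := by
  obtain ⟨K, hK⟩ := hf.locallyLipschitz.locallyLipschitzOn.exists_lipschitzOnWith_of_compact hs
  exact (hK.hausdorffMeasure_image_le (by positivity)).trans_lt
    (ENNReal.mul_lt_top (by simp) hs.measure_lt_top)

section InnerProductSpace

variable {E : Type*} [NormedAddCommGroup E] [InnerProductSpace ℝ E]

theorem mem_image_stereoInvFunAux_of_inner_nonpos {v x : E} (hv : ‖v‖ = 1) (hx : ‖x‖ = 1)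
    (hvx : ⟪v, x⟫ ≤ 0) :
    x ∈ (stereoInvFunAux v ∘ (↑)) '' closedBall (0 : (ℝ ∙ v)ᗮ) 2 := by
  have hx' : x ∈ sphere (0 : E) 1 := by simpa using hx
  have hxv : x ≠ v := by
    rintro rfl
    norm_num [real_inner_self_eq_norm_sq, hv] at hvx
  refine ⟨stereoToFun v x, ?_, congrArg Subtype.val (stereo_left_inv hv (x := ⟨x, hx'⟩) hxv)⟩
  have hproj : ‖(ℝ ∙ v)ᗮ.orthogonalProjectionOnto x‖ ≤ 1 :=
    hx ▸ (ℝ ∙ v)ᗮ.norm_orthogonalProjectionOnto_apply_le x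
  have hden : 1 ≤ 1 - ⟪v, x⟫ := by linarith
  rw [mem_closedBall_zero_iff, stereoToFun_apply, norm_smul, innerSL_apply_apply,
    Real.norm_eq_abs, abs_div, abs_two, abs_of_pos (by linarith)]
  calc 2 / (1 - ⟪v, x⟫) * ‖(ℝ ∙ v)ᗮ.orthogonalProjectionOnto x‖ ≤ 2 / 1 * 1 := by gcongr
    _ = 2 := by norm_num

theorem closedBall_subset_orthogonalProjectionOnto_image_sphere {v : E} (hv : ‖v‖ = 1) :
    closedBall (0 : (ℝ ∙ v)ᗮ) 1 ⊆ (ℝ ∙ v)ᗮ.orthogonalProjectionOnto '' sphere (0 : E) 1 := by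
  intro w hw
  rw [mem_closedBall_zero_iff] at hw
  have hwv : ⟪(w : E), √(1 - ‖w‖ ^ 2) • v⟫ = 0 := by
    rw [inner_smul_right, Submodule.mem_orthogonal_singleton_iff_inner_left.mp w.2, mul_zero]
  refine ⟨w + √(1 - ‖w‖ ^ 2) • v, ?_, ?_⟩
  · rw [mem_sphere_zero_iff_norm, ← mul_self_inj (norm_nonneg _) zero_le_one,
      norm_add_sq_eq_norm_sq_add_norm_sq_real hwv, norm_smul, hv, mul_one,
      Real.norm_of_nonneg (Real.sqrt_nonneg _), Real.mul_self_sqrt (by nlinarith [norm_nonneg w])]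
    simp only [Submodule.coe_norm]
    ring
  · rw [map_add, map_smul, Submodule.orthogonalProjectionOnto_mem_subspace_eq_self,
      Submodule.orthogonalProjectionOnto_orthogonalComplement_singleton_eq_zero, smul_zero,
      add_zero]

variable [FiniteDimensional ℝ E] [MeasurableSpace E] [BorelSpace E]

theorem hausdorffMeasure_sphere_pos {m : ℕ} (hE : finrank ℝ E = m + 1) :
    0 < μH[m] (sphere (0 : E) 1) := by
  have : Fact (finrank ℝ E = m + 1) := ⟨hE⟩
  have : Nontrivial E := finrank_pos_iff (R := ℝ) |>.mp (by omega)
  obtain ⟨v, hv⟩ := exists_norm_eq E zero_le_one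
  have hball := measure_closedBall_pos (μH[finrank ℝ (ℝ ∙ v)ᗮ] : Measure (ℝ ∙ v)ᗮ) 0 one_pos
  rw [Submodule.finrank_orthogonal_span_singleton (n := m)
    (norm_ne_zero_iff.mp (by simp [hv]))] at hball
  calc 0 < μH[m] (closedBall (0 : (ℝ ∙ v)ᗮ) 1) := hball
    _ ≤ μH[m] ((ℝ ∙ v)ᗮ.orthogonalProjectionOnto '' sphere (0 : E) 1) :=
      measure_mono (closedBall_subset_orthogonalProjectionOnto_image_sphere hv)
    _ ≤ μH[m] (sphere (0 : E) 1) := by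
      simpa using (ℝ ∙ v)ᗮ.lipschitzWith_orthogonalProjectionOnto.hausdorffMeasure_image_le
        (d := m) (by positivity) (sphere (0 : E) 1)

theorem hausdorffMeasure_sphere_lt_top {m : ℕ} (hE : finrank ℝ E = m + 1) :
    μH[m] (sphere (0 : E) 1) < ∞ := by
  have : Fact (finrank ℝ E = m + 1) := ⟨hE⟩
  have : Nontrivial E := finrank_pos_iff (R := ℝ) |>.mp (by omega)
  obtain ⟨v, hv⟩ := exists_norm_eq E zero_le_one
  have hcap (w : E) (hw : ‖w‖ = 1) :
      μH[m] ((stereoInvFunAux w ∘ (↑)) '' closedBall (0 : (ℝ ∙ w)ᗮ) 2) < ∞ := by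
    rw [← Submodule.finrank_orthogonal_span_singleton (𝕜 := ℝ) (n := m) (v := w)
      (norm_ne_zero_iff.mp (by simp [hw]))]
    exact hausdorffMeasure_image_lt_top_of_contDiff
      (contDiff_stereoInvFunAux.comp (ℝ ∙ w)ᗮ.subtypeL.contDiff) (isCompact_closedBall _ _)
  have hcover : sphere (0 : E) 1 ⊆ (stereoInvFunAux v ∘ (↑)) '' closedBall (0 : (ℝ ∙ v)ᗮ) 2 ∪
      (stereoInvFunAux (-v) ∘ (↑)) '' closedBall (0 : (ℝ ∙ -v)ᗮ) 2 := by
    intro x hx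
    rw [mem_sphere_zero_iff_norm] at hx
    rcases le_total ⟪v, x⟫ 0 with hvx | hvx
    · exact .inl (mem_image_stereoInvFunAux_of_inner_nonpos hv hx hvx)
    · refine .inr (mem_image_stereoInvFunAux_of_inner_nonpos (by simpa) hx ?_)
      simpa [inner_neg_left] using hvx
  exact (measure_mono hcover).trans_lt
    (measure_union_lt_top (hcap v hv) (hcap (-v) (by simpa)))

variable {μ : Measure E}

theorem continuous_setIntegral_sphere_exp_inner (hμ : μ (sphere 0 1) ≠ ∞) :
    Continuous fun y : E => ∫ ω in sphere (0 : E) 1, exp ⟪y, ω⟫ ∂μ := by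
  have : IsFiniteMeasure (μ.restrict (sphere 0 1)) := isFiniteMeasure_restrict.mpr hμ
  have h := continuous_parametric_integral_of_continuous (μ := μ.restrict (sphere 0 1))
    (f := fun y ω : E => exp ⟪y, ω⟫) (by fun_prop) (isCompact_sphere 0 1)
  simpa only [Measure.restrict_restrict isClosed_sphere.measurableSet, Set.inter_self] using h

theorem measureReal_sphere_mul_exp_neg_norm_le (hμ : μ (sphere 0 1) ≠ ∞) (y : E) :
    μ.real (sphere 0 1) * exp (-‖y‖) ≤ ∫ ω in sphere (0 : E) 1, exp ⟪y, ω⟫ ∂μ := by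
  have hint : IntegrableOn (fun ω => exp ⟪y, ω⟫) (sphere 0 1) μ :=
    (by fun_prop : Continuous fun ω : E => exp ⟪y, ω⟫).continuousOn.integrableOn_of_subset_isCompact
      (isCompact_sphere 0 1) isClosed_sphere.measurableSet subset_rfl hμ
  rw [mul_comm]
  refine setIntegral_ge_of_const_le_real isClosed_sphere.measurableSet hμ (fun ω hω => ?_) hint
  rw [exp_le_exp, neg_le]
  calc -⟪y, ω⟫ ≤ ‖y‖ * ‖ω‖ := by simpa using neg_le_abs ⟪y, ω⟫ |>.trans (abs_real_inner_le_norm y ω)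
    _ = ‖y‖ := by rw [mem_sphere_zero_iff_norm.mp hω, mul_one]

end InnerProductSpace

theorem hausdorffMeasure_sphere_euclideanSpace_pos_lt_top {n : ℕ} (hn : 1 ≤ n) :
    0 < μH[(n : ℝ) - 1] (sphere (0 : EuclideanSpace ℝ (Fin n)) 1) ∧
      μH[(n : ℝ) - 1] (sphere (0 : EuclideanSpace ℝ (Fin n)) 1) < ∞ := by
  obtain ⟨m, rfl⟩ := Nat.exists_eq_add_of_le' hn
  have hE : finrank ℝ (EuclideanSpace ℝ (Fin (m + 1))) = m + 1 := finrank_euclideanSpace_fin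
  rw [Nat.cast_succ, add_sub_cancel_right]
  exact ⟨hausdorffMeasure_sphere_pos hE, hausdorffMeasure_sphere_lt_top hE⟩

theorem continuous_YZphi {n : ℕ} (hn : 1 ≤ n) : Continuous (YZphi n) := by
  unfold YZphi
  split_ifs
  · fun_prop
  · exact continuous_setIntegral_sphere_exp_inner
      (hausdorffMeasure_sphere_euclideanSpace_pos_lt_top hn).2.ne

theorem exists_pos_mul_exp_neg_norm_le_YZphi {n : ℕ} (hn : 1 ≤ n) :
    ∃ c > 0, ∀ y, c * exp (-‖y‖) ≤ YZphi n y := by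
  unfold YZphi
  split_ifs
  · refine ⟨1, one_pos, fun y => ?_⟩
    have := exp_le_exp.mpr (neg_le_self (norm_nonneg y))
    rw [one_mul, cosh_eq]
    linarith
  · obtain ⟨hpos, hfin⟩ := hausdorffMeasure_sphere_euclideanSpace_pos_lt_top hn
    exact ⟨_, ENNReal.toReal_pos hpos.ne' hfin.ne,
      measureReal_sphere_mul_exp_neg_norm_le hfin.ne⟩

theorem exists_pos_mul_rpow_le_integral_exp_mul_rpow {q lam0 C : ℝ} (hq : -1 < q)
    (hlam0 : 0 < lam0) (hC : 0 ≤ C) :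
    ∃ B > 0, ∀ a ≥ 1, ∀ b ≤ C * a,
      B * a ^ (-q - 1) ≤ ∫ lam in (0 : ℝ)..lam0, exp (-(lam * b)) * lam ^ q := by
  have hq1 : 0 < q + 1 := by linarith
  refine ⟨exp (-(lam0 * C)) * (lam0 ^ (q + 1) / (q + 1)), by positivity, fun a ha b hb => ?_⟩
  have ha0 : 0 < a := by linarith
  set c1 := lam0 / a with hc1_def
  have hc1 : 0 < c1 := by positivity
  have hint (u v : ℝ) : IntervalIntegrable (fun lam => exp (-(lam * b)) * lam ^ q) volume u v :=
    (intervalIntegral.intervalIntegrable_rpow' hq).continuousOn_mul (by fun_prop)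
  calc exp (-(lam0 * C)) * (lam0 ^ (q + 1) / (q + 1)) * a ^ (-q - 1)
      = ∫ lam in (0 : ℝ)..c1, exp (-(lam0 * C)) * lam ^ q := by
        rw [intervalIntegral.integral_const_mul, integral_rpow (.inl hq), zero_rpow hq1.ne',
          hc1_def, div_rpow hlam0.le ha0.le, show -q - 1 = -(q + 1) by ring, rpow_neg ha0.le]
        ring
    _ ≤ ∫ lam in (0 : ℝ)..c1, exp (-(lam * b)) * lam ^ q := by
        refine intervalIntegral.integral_mono_on hc1.le
          ((intervalIntegral.intervalIntegrable_rpow' hq).const_mul _) (hint _ _)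
          fun lam hlam => mul_le_mul_of_nonneg_right ?_ (rpow_nonneg hlam.1 q)
        rw [exp_le_exp, neg_le_neg_iff]
        calc lam * b ≤ c1 * (C * a) := by
              nlinarith [hlam.1, hlam.2, mul_nonneg hC ha0.le]
          _ = lam0 * C := by rw [hc1_def]; field_simp
    _ ≤ ∫ lam in (0 : ℝ)..lam0, exp (-(lam * b)) * lam ^ q :=
        intervalIntegral.integral_mono_interval le_rfl hc1.le (div_le_self hlam0.le ha)
          ((ae_restrict_mem measurableSet_Ioc).mono fun lam hlam =>
            mul_nonneg (exp_pos _).le (rpow_nonneg hlam.1.le q))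
          (hint _ _)

theorem exp_sub_div_two_le_exp_neg_mul_cosh (u v : ℝ) : exp (v - u) / 2 ≤ exp (-u) * cosh v := by
  calc exp (v - u) / 2 ≤ (exp (v - u) + exp (-v - u)) / 2 := by linarith [exp_pos (-v - u)]
    _ = exp (-u) * cosh v := by
      simp only [cosh_eq, sub_eq_add_neg, exp_add]
      ring

theorem mul_exp_le_xiq_integrand {n : ℕ} {c k R q s t lam : ℝ} {x : EuclideanSpace ℝ (Fin n)}
    (hYZ : ∀ y, c * exp (-‖y‖) ≤ YZphi n y) (hc : 0 ≤ c) (hx : ‖x‖ ≤ Ak k s + R)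
    (hlam : 0 ≤ lam) :
    c / 2 * (exp (-(lam * (2 * (Ak k s + R)))) * lam ^ q) ≤
      exp (-(lam * (Ak k t + R))) * cosh (lam * (phik k t - phik k s)) * YZphi n (lam • x) *
        lam ^ q := by
  have hcosh : exp (-(lam * (Ak k s + R))) / 2 ≤
      exp (-(lam * (Ak k t + R))) * cosh (lam * (phik k t - phik k s)) := by
    convert exp_sub_div_two_le_exp_neg_mul_cosh (lam * (Ak k t + R))
      (lam * (phik k t - phik k s)) using 3
    unfold Ak
    ring
  have hYZx : c * exp (-(lam * (Ak k s + R))) ≤ YZphi n (lam • x) := by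
    refine le_trans ?_ (hYZ _)
    gcongr
    rw [norm_smul, norm_of_nonneg hlam]
    exact mul_le_mul_of_nonneg_left hx hlam
  calc c / 2 * (exp (-(lam * (2 * (Ak k s + R)))) * lam ^ q)
      = exp (-(lam * (Ak k s + R))) / 2 * (c * exp (-(lam * (Ak k s + R)))) * lam ^ q := by
        rw [show -(lam * (2 * (Ak k s + R))) = -(lam * (Ak k s + R)) + -(lam * (Ak k s + R)) by
          ring, exp_add]
        ring
    _ ≤ _ := by gcongr

theorem xiq_lower_bound_general
    (n : ℕ) (hn : 1 ≤ n) (k : ℝ)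
    (lam0 : ℝ) (hlam0 : 0 < lam0) (R : ℝ)
    (q : ℝ) (hq : -1 < q) :
    ∃ B₀ > (0:ℝ), ∀ s t : ℝ, 1 ≤ s → s ≤ t →
      ∀ x : EuclideanSpace ℝ (Fin n), ‖x‖ ≤ Ak k s + R →
        B₀ * (3 + |Ak k s|) ^ (-q - 1) ≤ xiq n lam0 R k q t s x := by
  obtain ⟨c, hc, hYZ⟩ := exists_pos_mul_exp_neg_norm_le_YZphi hn
  obtain ⟨B, hB, hint⟩ := exists_pos_mul_rpow_le_integral_exp_mul_rpow hq hlam0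
    (C := 2 * (1 + |R|)) (by positivity)
  refine ⟨c / 2 * B, by positivity, fun s t _ _ x hx => ?_⟩
  have hb : 2 * (Ak k s + R) ≤ 2 * (1 + |R|) * (3 + |Ak k s|) := by
    nlinarith [le_abs_self (Ak k s), le_abs_self R, abs_nonneg (Ak k s), abs_nonneg R]
  have hcont := continuous_YZphi hn
  calc c / 2 * B * (3 + |Ak k s|) ^ (-q - 1)
      ≤ c / 2 * ∫ lam in (0 : ℝ)..lam0, exp (-(lam * (2 * (Ak k s + R)))) * lam ^ q := by
        rw [mul_assoc]
        gcongr
        exact hint _ (by linarith [abs_nonneg (Ak k s)]) _ hb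
    _ = ∫ lam in (0 : ℝ)..lam0, c / 2 * (exp (-(lam * (2 * (Ak k s + R)))) * lam ^ q) :=
        (intervalIntegral.integral_const_mul _ _).symm
    _ ≤ xiq n lam0 R k q t s x :=
        intervalIntegral.integral_mono_on hlam0.le
          (((intervalIntegral.intervalIntegrable_rpow' hq).continuousOn_mul
            (by fun_prop)).const_mul _)
          ((intervalIntegral.intervalIntegrable_rpow' hq).continuousOn_mul (by fun_prop))
          fun lam hlam => mul_exp_le_xiq_integrand hYZ hc.le hx hlam.1

/-- Lower bound for the auxiliary function `ξ_q`. -/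
theorem xiq_lower_bound
    (n : ℕ) (hn : 1 ≤ n) (k : ℝ) (hk : k ∈ Set.Ico (0:ℝ) 1)
    (lam0 : ℝ) (hlam0 : 0 < lam0) (R : ℝ) (hR : 0 < R)
    (q : ℝ) (hq : -1 < q) :
    ∃ B₀ > (0:ℝ), ∀ s t : ℝ, 1 ≤ s → s ≤ t →
      ∀ x : EuclideanSpace ℝ (Fin n), ‖x‖ ≤ Ak k s + R →
        B₀ * (3 + |Ak k s|) ^ (-q - 1) ≤ xiq n lam0 R k q t s x :=
  xiq_lower_bound_general n hn k lam0 hlam0 R q hq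
end

section
/- Let n ≥ 1 be an integer, k ∈ [0,1), λ₀ > 0, R > 0 and q > −1. Then there exists a constant B₁ > 0, depending only on n, λ₀, q, R, k, such that for all t ≥ s ≥ 1 and all x ∈ ℝⁿ with |x| ≤ A_k(s) + R: η_q(t,s,x;k) ≥ B₁ (st)^{k/2} ⟨A_k(t)⟩^{−1} ⟨A_k(s)⟩^{−q}. -/
open MeasureTheory Real Set Metric
open scoped ENNReal NNReal

-- ### Auxiliary lemmas ###


noncomputable def capQ (m : ℕ) (u : Fin m → ℝ) : ℝ := ∑ j, (u j)^2

def capD (m : ℕ) : Set (Fin m → ℝ) := {u | capQ m u ≤ 1 - 1/(m+1)}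

noncomputable def capG (m : ℕ) (u : Fin m → ℝ) : ℝ := Real.sqrt (1 - capQ m u)

noncomputable def capMap (m : ℕ) (i : Fin (m+1)) (ε : ℝ) (u : Fin m → ℝ) :
    EuclideanSpace ℝ (Fin (m+1)) := WithLp.toLp 2 (i.insertNth (ε * capG m u) u)

lemma one_div_le_sub_capQ {m : ℕ} {u : Fin m → ℝ} (hu : u ∈ capD m) :
    1/((m:ℝ)+1) ≤ 1 - capQ m u := by
  have := hu
  simp only [capD, Set.mem_setOf_eq] at this
  linarith

lemma capQ_nonneg (m : ℕ) (u : Fin m → ℝ) : 0 ≤ capQ m u :=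
  Finset.sum_nonneg fun j _ => sq_nonneg _

lemma abs_le_one_of_mem_capD {m : ℕ} {u : Fin m → ℝ} (hu : u ∈ capD m) (j : Fin m) :
    |u j| ≤ 1 := by
  have h1 : (u j)^2 ≤ capQ m u :=
    Finset.single_le_sum (fun j _ => sq_nonneg (u j)) (Finset.mem_univ j)
  have h2 : 1/((m:ℝ)+1) ≤ 1 - capQ m u := one_div_le_sub_capQ hu
  have h3 : (0:ℝ) < 1/((m:ℝ)+1) := by positivity
  rw [← sq_le_one_iff_abs_le_one]
  linarith

lemma capG_sq {m : ℕ} {u : Fin m → ℝ} (hu : u ∈ capD m) :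
    (capG m u)^2 = 1 - capQ m u := by
  have h2 := one_div_le_sub_capQ hu
  have h3 : (0:ℝ) < 1/((m:ℝ)+1) := by positivity
  exact Real.sq_sqrt (by linarith)

lemma capG_ge {m : ℕ} {u : Fin m → ℝ} (hu : u ∈ capD m) :
    Real.sqrt (1/((m:ℝ)+1)) ≤ capG m u :=
  Real.sqrt_le_sqrt (one_div_le_sub_capQ hu)

lemma capG_pos {m : ℕ} {u : Fin m → ℝ} (hu : u ∈ capD m) : 0 < capG m u := by
  have := capG_ge hu
  have h3 : (0:ℝ) < Real.sqrt (1/((m:ℝ)+1)) := Real.sqrt_pos.2 (by positivity)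
  linarith

lemma capG_diff {m : ℕ} {u v : Fin m → ℝ} (hu : u ∈ capD m) (hv : v ∈ capD m) :
    |capG m u - capG m v| ≤ (m:ℝ) * Real.sqrt (m+1) * dist u v := by
  set s := Real.sqrt ((m:ℝ)+1) with hs
  have hspos : 0 < s := Real.sqrt_pos.2 (by positivity)
  have hd : 0 ≤ dist u v := dist_nonneg
  -- |Qu - Qv| ≤ 2 m d
  have hQ : |capQ m u - capQ m v| ≤ 2*m*dist u v := by
    have h1 : capQ m u - capQ m v = ∑ j, ((u j)^2 - (v j)^2) := by
      rw [capQ, capQ, ← Finset.sum_sub_distrib]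
    rw [h1]
    refine (Finset.abs_sum_le_sum_abs _ _).trans ?_
    have hterm : ∀ j : Fin m, |(u j)^2 - (v j)^2| ≤ 2 * dist u v := by
      intro j
      have e : (u j)^2 - (v j)^2 = (u j - v j)*(u j + v j) := by ring
      rw [e, abs_mul]
      have h2 : |u j - v j| ≤ dist u v := by
        rw [← Real.dist_eq]; exact dist_le_pi_dist u v j
      have h3 : |u j + v j| ≤ 2 :=
        (abs_add_le _ _).trans (by
          have := abs_le_one_of_mem_capD hu j
          have := abs_le_one_of_mem_capD hv j
          linarith)
      calc |u j - v j| * |u j + v j| ≤ dist u v * 2 :=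
            mul_le_mul h2 h3 (abs_nonneg _) hd
        _ = 2 * dist u v := by ring
    calc ∑ j, |(u j)^2 - (v j)^2| ≤ ∑ _j : Fin m, 2 * dist u v :=
          Finset.sum_le_sum fun j _ => hterm j
      _ = m * (2 * dist u v) := by
          rw [Finset.sum_const, Finset.card_univ, Fintype.card_fin, nsmul_eq_mul]
      _ = 2*m*dist u v := by ring
  -- sum of capG's is bounded below
  have hsum : 2 / s ≤ capG m u + capG m v := by
    have h1 := capG_ge hu
    have h2 := capG_ge hv
    have h3 : Real.sqrt (1/((m:ℝ)+1)) = 1 / s := by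
      rw [hs, one_div, one_div, Real.sqrt_inv]
    rw [h3] at h1 h2
    have : 2 / s = 1/s + 1/s := by ring
    linarith
  -- product identity
  have hgd : |capG m u - capG m v| * (capG m u + capG m v) = |capQ m u - capQ m v| := by
    have h1 : (capG m u - capG m v) * (capG m u + capG m v)
        = capQ m v - capQ m u := by
      have e1 := capG_sq hu
      have e2 := capG_sq hv
      nlinarith [e1, e2]
    have h2 : 0 ≤ capG m u + capG m v := by
      have := capG_pos hu; have := capG_pos hv; linarith
    calc |capG m u - capG m v| * (capG m u + capG m v)
        = |(capG m u - capG m v) * (capG m u + capG m v)| := by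
          rw [abs_mul, abs_of_nonneg h2]
      _ = |capQ m v - capQ m u| := by rw [h1]
      _ = |capQ m u - capQ m v| := abs_sub_comm _ _
  -- combine
  have key : |capG m u - capG m v| * (2 / s) ≤ 2*m*dist u v := by
    calc |capG m u - capG m v| * (2/s) ≤ |capG m u - capG m v| * (capG m u + capG m v) :=
          mul_le_mul_of_nonneg_left hsum (abs_nonneg _)
      _ = |capQ m u - capQ m v| := hgd
      _ ≤ 2*m*dist u v := hQ
  have key2 := mul_le_mul_of_nonneg_right key hspos.le
  have h2s : 2/s*s = 2 := div_mul_cancel₀ 2 hspos.ne'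
  have key3 : |capG m u - capG m v| * 2 ≤ 2*m*dist u v*s := by
    calc |capG m u - capG m v| * 2 = |capG m u - capG m v| * (2/s) * s := by
          rw [mul_assoc, h2s]
      _ ≤ 2*m*dist u v*s := key2
  nlinarith [key3]

lemma capMap_lipschitz (m : ℕ) (i : Fin (m+1)) (ε : ℝ) (hε : |ε| ≤ 1) :
    LipschitzOnWith (Real.toNNReal ((m:ℝ) * Real.sqrt (m+1) + m + 1)) (capMap m i ε)
      (capD m) := by
  apply LipschitzOnWith.of_dist_le_mul
  intro u hu v hv
  have hK0 : (0:ℝ) ≤ (m:ℝ) * Real.sqrt (m+1) + m + 1 := by positivity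
  rw [Real.coe_toNNReal _ hK0]
  set d := dist u v with hdd
  have hd : 0 ≤ d := dist_nonneg
  set K := (m:ℝ) * Real.sqrt (m+1) with hKdef
  have hKnn : 0 ≤ K := by positivity
  have hgd : |capG m u - capG m v| ≤ K * d := capG_diff hu hv
  have hcoords : ∀ j : Fin m, dist (u j) (v j) ≤ d := fun j => dist_le_pi_dist u v j
  rw [EuclideanSpace.dist_eq]
  have hsplit :
      ∑ j : Fin (m+1), dist (capMap m i ε u j) (capMap m i ε v j) ^ 2
        = dist (ε * capG m u) (ε * capG m v) ^ 2
          + ∑ j : Fin m, dist (u j) (v j) ^ 2 := by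
    rw [Fin.sum_univ_succAbove (fun j => dist (capMap m i ε u j) (capMap m i ε v j) ^ 2) i]
    congr 1
    · have e1 : capMap m i ε u i = ε * capG m u := by
        show Fin.insertNth (α := fun _ => ℝ) i (ε * capG m u) u i = _
        simp
      have e2 : capMap m i ε v i = ε * capG m v := by
        show Fin.insertNth (α := fun _ => ℝ) i (ε * capG m v) v i = _
        simp
      rw [e1, e2]
    · apply Finset.sum_congr rfl
      intro j _
      have e1 : capMap m i ε u (i.succAbove j) = u j := by
        show Fin.insertNth (α := fun _ => ℝ) i (ε * capG m u) u (i.succAbove j) = _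
        simp
      have e2 : capMap m i ε v (i.succAbove j) = v j := by
        show Fin.insertNth (α := fun _ => ℝ) i (ε * capG m v) v (i.succAbove j) = _
        simp
      rw [e1, e2]
  rw [hsplit]
  have h1 : dist (ε * capG m u) (ε * capG m v) ^ 2 ≤ (K*d)^2 := by
    rw [Real.dist_eq]
    have : |ε * capG m u - ε * capG m v| = |ε| * |capG m u - capG m v| := by
      rw [← abs_mul]; ring_nf
    rw [this]
    have h2 : |ε| * |capG m u - capG m v| ≤ K * d := by
      calc |ε| * |capG m u - capG m v| ≤ 1 * (K*d) :=
            mul_le_mul hε hgd (abs_nonneg _) zero_le_one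
        _ = K*d := one_mul _
    exact pow_le_pow_left₀ (by positivity) h2 2
  have h2 : ∑ j : Fin m, dist (u j) (v j) ^ 2 ≤ m * d^2 := by
    calc ∑ j : Fin m, dist (u j) (v j) ^ 2 ≤ ∑ _j : Fin m, d^2 :=
          Finset.sum_le_sum fun j _ => pow_le_pow_left₀ dist_nonneg (hcoords j) 2
      _ = m * d^2 := by
          rw [Finset.sum_const, Finset.card_univ, Fintype.card_fin, nsmul_eq_mul]
  calc Real.sqrt (dist (ε * capG m u) (ε * capG m v) ^ 2 + ∑ j : Fin m, dist (u j) (v j) ^ 2)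
      ≤ Real.sqrt (((K + m + 1)*d)^2) := by
        apply Real.sqrt_le_sqrt
        have hm : (0:ℝ) ≤ (m:ℝ) := Nat.cast_nonneg m
        nlinarith [h1, h2, sq_nonneg d, hd, hKnn, hm, mul_nonneg hKnn (sq_nonneg d),
          mul_nonneg hm (sq_nonneg d), mul_nonneg (mul_nonneg hm hKnn) (sq_nonneg d)]
    _ = (K + m + 1)*d := Real.sqrt_sq (by positivity)

lemma sphere_subset_caps (m : ℕ) :
    sphere (0 : EuclideanSpace ℝ (Fin (m+1))) 1 ⊆
      ⋃ i : Fin (m+1), (capMap m i 1 '' capD m ∪ capMap m i (-1) '' capD m) := by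
  intro ω hω
  have hnorm : ‖ω‖ = 1 := mem_sphere_zero_iff_norm.1 hω
  have hsum : ∑ j : Fin (m+1), (ω j)^2 = 1 := by
    have h1 : ‖ω‖ = Real.sqrt (∑ j, ‖ω j‖^2) := EuclideanSpace.norm_eq ω
    have h2 : ∑ j : Fin (m+1), ‖ω j‖^2 = ∑ j : Fin (m+1), (ω j)^2 := by
      apply Finset.sum_congr rfl; intro j _; rw [Real.norm_eq_abs, sq_abs]
    have h3 : Real.sqrt (∑ j : Fin (m+1), (ω j)^2) = 1 := by rw [← h2, ← h1, hnorm]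
    have h4 : 0 ≤ ∑ j : Fin (m+1), (ω j)^2 := Finset.sum_nonneg fun j _ => sq_nonneg _
    nlinarith [Real.sq_sqrt h4, h3]
  obtain ⟨i, hi⟩ := Finite.exists_max (fun i => |ω i|)
  have hmax : 1 ≤ ((m:ℝ)+1) * (ω i)^2 := by
    have h1 : ∀ j : Fin (m+1), (ω j)^2 ≤ (ω i)^2 := by
      intro j
      rw [← sq_abs (ω j), ← sq_abs (ω i)]
      exact pow_le_pow_left₀ (abs_nonneg _) (hi j) 2
    have h2 : (1:ℝ) = ∑ j : Fin (m+1), (ω j)^2 := hsum.symm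
    have h3 : ∑ j : Fin (m+1), (ω j)^2 ≤ ∑ _j : Fin (m+1), (ω i)^2 :=
      Finset.sum_le_sum fun j _ => h1 j
    have h4 : ∑ _j : Fin (m+1), (ω i)^2 = ((m:ℝ)+1) * (ω i)^2 := by
      rw [Finset.sum_const, Finset.card_univ, Fintype.card_fin, nsmul_eq_mul]
      push_cast; ring
    linarith [h2, h3, h4 ▸ h3]
  set u := i.removeNth ω with hu
  have hQu : capQ m u = 1 - (ω i)^2 := by
    have := Fin.sum_univ_succAbove (fun j => (ω j)^2) i
    rw [hsum] at this
    simp only [capQ, hu, Fin.removeNth]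
    linarith
  have huD : u ∈ capD m := by
    simp only [capD, Set.mem_setOf_eq, hQu]
    have hm1 : (0:ℝ) < (m:ℝ)+1 := by positivity
    have : 1/((m:ℝ)+1) ≤ (ω i)^2 := by
      rw [div_le_iff₀ hm1]
      linarith
    linarith
  have hG : capG m u = |ω i| := by
    rw [capG, hQu]
    have : 1 - (1 - (ω i)^2) = (ω i)^2 := by ring
    rw [this, Real.sqrt_sq_eq_abs]
  apply Set.mem_iUnion.2
  refine ⟨i, ?_⟩
  rcases le_or_gt 0 (ω i) with hsign | hsign
  · left
    refine ⟨u, huD, ?_⟩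
    have : (1:ℝ) * capG m u = ω i := by rw [one_mul, hG, abs_of_nonneg hsign]
    rw [capMap, this, hu]
    exact congrArg (WithLp.toLp 2) (Fin.insertNth_self_removeNth i ω)
  · right
    refine ⟨u, huD, ?_⟩
    have : (-1:ℝ) * capG m u = ω i := by rw [hG, abs_of_neg hsign]; ring
    rw [capMap, this, hu]
    exact congrArg (WithLp.toLp 2) (Fin.insertNth_self_removeNth i ω)

lemma capD_subset_ball (m : ℕ) : capD m ⊆ closedBall (0 : Fin m → ℝ) 1 := by
  intro u hu
  rw [mem_closedBall, dist_pi_le_iff zero_le_one]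
  intro j
  have : dist (u j) ((0 : Fin m → ℝ) j) = |u j| := by
    simp [Real.dist_eq]
  rw [this]
  exact abs_le_one_of_mem_capD hu j

lemma hausdorff_pi_eq (m : ℕ) : (μH[(m:ℝ)] : Measure (Fin m → ℝ)) = volume := by
  have := MeasureTheory.hausdorffMeasure_pi_real (ι := Fin m)
  simpa using this

lemma sphere_hausdorff_ne_top (m : ℕ) :
    μH[(m:ℝ)] (sphere (0 : EuclideanSpace ℝ (Fin (m+1))) 1) < ⊤ := by
  have hd : (0:ℝ) ≤ m := by positivity
  set K := Real.toNNReal ((m:ℝ) * Real.sqrt (m+1) + m + 1) with hK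
  have hvol : μH[(m:ℝ)] (capD m) < ⊤ := by
    rw [hausdorff_pi_eq m]
    exact lt_of_le_of_lt (measure_mono (capD_subset_ball m)) measure_closedBall_lt_top
  have hbound : ∀ (i : Fin (m+1)) (ε : ℝ), |ε| ≤ 1 →
      μH[(m:ℝ)] (capMap m i ε '' capD m) < ⊤ := by
    intro i ε hε
    refine lt_of_le_of_lt ((capMap_lipschitz m i ε hε).hausdorffMeasure_image_le hd) ?_
    exact ENNReal.mul_lt_top (ENNReal.rpow_lt_top_of_nonneg hd ENNReal.coe_ne_top) hvol
  calc μH[(m:ℝ)] (sphere (0 : EuclideanSpace ℝ (Fin (m+1))) 1)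
      ≤ ∑' i : Fin (m+1), μH[(m:ℝ)] (capMap m i 1 '' capD m ∪ capMap m i (-1) '' capD m) :=
        le_trans (measure_mono (sphere_subset_caps m)) (measure_iUnion_le _)
    _ < ⊤ := by
        rw [tsum_fintype]
        apply ENNReal.sum_lt_top.2
        intro i _
        refine lt_of_le_of_lt (measure_union_le _ _) ?_
        exact ENNReal.add_lt_top.2 ⟨hbound i 1 (by norm_num), hbound i (-1) (by norm_num)⟩

lemma sphere_hausdorff_pos (m : ℕ) :
    0 < μH[(m:ℝ)] (sphere (0 : EuclideanSpace ℝ (Fin (m+1))) 1) := by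
  have hd : (0:ℝ) ≤ m := by positivity
  set S := sphere (0 : EuclideanSpace ℝ (Fin (m+1))) 1 with hS
  set proj : EuclideanSpace ℝ (Fin (m+1)) → (Fin m → ℝ) := fun ω j => ω j.castSucc with hproj
  have hlip : LipschitzWith 1 proj := by
    apply LipschitzWith.of_dist_le_mul
    intro x y
    rw [NNReal.coe_one, one_mul]
    rw [dist_pi_le_iff dist_nonneg]
    intro j
    -- coordinate distance bounded by euclidean distance
    have h1 : dist (x j.castSucc) (y j.castSucc) ^ 2
        ≤ ∑ i : Fin (m+1), dist (x i) (y i) ^ 2 :=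
      Finset.single_le_sum (f := fun i : Fin (m+1) => dist (x i) (y i) ^ 2)
        (fun i _ => sq_nonneg _) (Finset.mem_univ _)
    calc dist (x j.castSucc) (y j.castSucc)
        = Real.sqrt (dist (x j.castSucc) (y j.castSucc) ^ 2) := (Real.sqrt_sq dist_nonneg).symm
      _ ≤ Real.sqrt (∑ i : Fin (m+1), dist (x i) (y i) ^ 2) := Real.sqrt_le_sqrt h1
      _ = dist x y := (EuclideanSpace.dist_eq x y).symm
  set r : ℝ := 1/(2*((m:ℝ)+1)) with hr
  have hrpos : 0 < r := by positivity
  have hsub : closedBall (0 : Fin m → ℝ) r ⊆ proj '' S := by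
    intro u hu
    have hcoord : ∀ j, |u j| ≤ r := by
      intro j
      rw [mem_closedBall] at hu
      have h0 := (dist_le_pi_dist u 0 j).trans hu
      have : dist (u j) ((0 : Fin m → ℝ) j) = |u j| := by simp [Real.dist_eq]
      rwa [this] at h0
    have hQ : capQ m u ≤ 1 - 1/((m:ℝ)+1) := by
      have h1 : ∀ j, (u j)^2 ≤ r^2 := by
        intro j
        rw [← sq_abs (u j)]
        exact pow_le_pow_left₀ (abs_nonneg _) (hcoord j) 2
      have h2 : capQ m u ≤ m * r^2 := by
        calc capQ m u ≤ ∑ _j : Fin m, r^2 := Finset.sum_le_sum fun j _ => h1 j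
          _ = m * r^2 := by
            rw [Finset.sum_const, Finset.card_univ, Fintype.card_fin, nsmul_eq_mul]
      have h3 : (m:ℝ) * r^2 ≤ 1 - 1/((m:ℝ)+1) := by
        have hm : (0:ℝ) ≤ (m:ℝ) := Nat.cast_nonneg m
        have h5 : (0:ℝ) < ((m:ℝ)+1) := by positivity
        have e1 : 1 - 1/((m:ℝ)+1) = (m:ℝ)/((m:ℝ)+1) := by field_simp; ring
        rw [hr, e1, div_pow, one_pow, mul_one_div, div_le_div_iff₀ (by positivity) h5]
        nlinarith [hm, h5, mul_nonneg hm (sq_nonneg ((m:ℝ)+1)), sq_nonneg ((m:ℝ)+1),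
          mul_nonneg hm h5.le]
      linarith
    -- build the preimage point
    have huD : u ∈ capD m := hQ
    have e_same : capMap m (Fin.last m) 1 u (Fin.last m) = capG m u := by
      show Fin.insertNth (α := fun _ => ℝ) (Fin.last m) ((1:ℝ) * capG m u) u (Fin.last m) = _
      simp
    have e_sa : ∀ j : Fin m, capMap m (Fin.last m) 1 u ((Fin.last m).succAbove j) = u j := by
      intro j
      show Fin.insertNth (α := fun _ => ℝ) (Fin.last m) ((1:ℝ) * capG m u) u ((Fin.last m).succAbove j) = _
      simp
    refine ⟨capMap m (Fin.last m) 1 u, ?_, ?_⟩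
    · rw [hS, mem_sphere_zero_iff_norm, EuclideanSpace.norm_eq]
      have hsum : ∑ j : Fin (m+1), ‖capMap m (Fin.last m) 1 u j‖^2
          = (capG m u)^2 + capQ m u := by
        rw [Fin.sum_univ_succAbove (fun j => ‖capMap m (Fin.last m) 1 u j‖^2) (Fin.last m)]
        congr 1
        · rw [e_same, Real.norm_eq_abs, sq_abs]
        · unfold capQ
          apply Finset.sum_congr rfl
          intro j _
          rw [e_sa j, Real.norm_eq_abs, sq_abs]
      rw [hsum, capG_sq huD,
        show 1 - capQ m u + capQ m u = 1 by ring, Real.sqrt_one]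
    · show proj (capMap m (Fin.last m) 1 u) = u
      funext j
      show capMap m (Fin.last m) 1 u (j.castSucc) = u j
      have hcs : j.castSucc = (Fin.last m).succAbove j := by rw [Fin.succAbove_last]
      rw [hcs, e_sa j]
  -- combine
  have step1 : volume (closedBall (0 : Fin m → ℝ) r) ≤ μH[(m:ℝ)] (proj '' S) := by
    rw [← hausdorff_pi_eq m]
    exact measure_mono hsub
  have step2 : μH[(m:ℝ)] (proj '' S) ≤ μH[(m:ℝ)] S := by
    have := hlip.hausdorffMeasure_image_le hd S
    simpa using this
  have hpos : (0:ℝ≥0∞) < volume (closedBall (0 : Fin m → ℝ) r) :=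
    measure_closedBall_pos volume _ hrpos
  exact lt_of_lt_of_le hpos (le_trans step1 step2)

section Sinhc

lemma sinhc_nonneg {y : ℝ} (hy : 0 ≤ y) : 0 ≤ sinhc y := by
  rcases eq_or_lt_of_le hy with h | h
  · simp [sinhc, ← h]
  · rw [sinhc, if_neg h.ne']
    exact div_nonneg (by positivity) h.le

lemma sinhc_le_exp {y : ℝ} (hy : 0 ≤ y) : sinhc y ≤ Real.exp y := by
  rcases eq_or_lt_of_le hy with h | h
  · rw [← h]; simp [sinhc]
  · rw [sinhc, if_neg h.ne']
    rw [div_le_iff₀ h]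
    have h1 : 1 - 2*y ≤ Real.exp (-(2*y)) := by
      have := Real.add_one_le_exp (-(2*y)); linarith
    have h2 : Real.exp (-(2*y)) = Real.exp (-y) * Real.exp (-y) := by
      rw [← Real.exp_add]; ring_nf
    have h3 : Real.exp y * Real.exp (-y) = 1 := by
      rw [← Real.exp_add]; simp
    have h4 := Real.exp_pos y
    have h5 := Real.exp_pos (-y)
    rw [Real.sinh_eq]
    nlinarith [mul_le_mul_of_nonneg_left h1 h4.le]

lemma exp_div_le_sinhc {y : ℝ} (hy : 0 ≤ y) : Real.exp y / (2*(1+y)) ≤ sinhc y := by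
  rcases eq_or_lt_of_le hy with h | h
  · rw [sinhc, ← h]
    norm_num
  · rw [sinhc, if_neg h.ne']
    rw [div_le_div_iff₀ (by positivity) h]
    have h1 : 1 + 2*y ≤ Real.exp (2*y) := by
      have := Real.add_one_le_exp (2*y); linarith
    have h2 : Real.exp (2*y) = Real.exp y * Real.exp y := by
      rw [← Real.exp_add]; ring_nf
    have h3 : Real.exp y * Real.exp (-y) = 1 := by
      rw [← Real.exp_add]; simp
    have h4 := Real.exp_pos y
    have h5 := Real.exp_pos (-y)
    rw [Real.sinh_eq]
    nlinarith [mul_le_mul_of_nonneg_left h1 h5.le]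

lemma measurable_sinhc : Measurable sinhc := by
  unfold sinhc
  apply Measurable.ite
  · exact measurableSet_eq
  · exact measurable_const
  · exact Real.measurable_sinh.div measurable_id

end Sinhc

section AkSec

variable {k : ℝ}

lemma Ak_nonneg (hk : k ∈ Set.Ico (0:ℝ) 1) {t : ℝ} (ht : 1 ≤ t) : 0 ≤ Ak k t := by
  have h1k : (0:ℝ) < 1 - k := by have := hk.2; linarith
  have h2 : (1:ℝ) ≤ t ^ (1-k) := Real.one_le_rpow ht h1k.le
  have h3 : (1:ℝ) ^ (1-k) = 1 := Real.one_rpow _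
  rw [Ak, phik, phik, h3, div_sub_div_same]
  exact div_nonneg (by linarith) h1k.le

lemma Ak_mono (hk : k ∈ Set.Ico (0:ℝ) 1) {s t : ℝ} (hs : 1 ≤ s) (hst : s ≤ t) :
    Ak k s ≤ Ak k t := by
  have h1k : (0:ℝ) < 1 - k := by have := hk.2; linarith
  have h2 : s ^ (1-k) ≤ t ^ (1-k) := Real.rpow_le_rpow (by linarith) hst h1k.le
  rw [Ak, Ak]
  apply sub_le_sub_right
  rw [phik, phik, div_le_div_iff_of_pos_right h1k]
  exact h2

lemma phik_sub (k s t : ℝ) : phik k t - phik k s = Ak k t - Ak k s := by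
  rw [Ak, Ak]; ring

end AkSec

section YZ

lemma YZphi_facts (n : ℕ) (hn : 1 ≤ n) :
    ∃ cY > (0:ℝ),
      (∀ y : EuclideanSpace ℝ (Fin n), cY * Real.exp (-‖y‖) ≤ YZphi n y) ∧
      (∀ x : EuclideanSpace ℝ (Fin n), Measurable fun l : ℝ => YZphi n (l • x)) ∧
      (∀ x : EuclideanSpace ℝ (Fin n), ∀ lam0 : ℝ, 0 ≤ lam0 →
        ∃ M : ℝ, ∀ l ∈ Set.Icc (0:ℝ) lam0, |YZphi n (l • x)| ≤ M) := by
  rcases eq_or_ne n 1 with rfl | hn1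
  · refine ⟨1, one_pos, ?_, ?_, ?_⟩
    · intro y
      rw [show YZphi 1 y = Real.cosh ‖y‖ from if_pos rfl, one_mul]
      calc Real.exp (-‖y‖) ≤ Real.exp 0 := Real.exp_le_exp.2 (neg_nonpos.2 (norm_nonneg y))
        _ = 1 := Real.exp_zero
        _ ≤ Real.cosh ‖y‖ := Real.one_le_cosh _
    · intro x
      have hYZ1 : (fun l : ℝ => YZphi 1 (l • x)) = fun l : ℝ => Real.cosh ‖l • x‖ := by
        funext l; exact if_pos rfl
      rw [hYZ1]
      exact (Real.continuous_cosh.comp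
        (continuous_norm.comp (continuous_id.smul continuous_const))).measurable
    · intro x lam0 hlam0
      refine ⟨Real.exp (lam0 * ‖x‖), ?_⟩
      intro l hl
      rw [show YZphi 1 (l • x) = Real.cosh ‖l • x‖ from if_pos rfl]
      have h1 : ‖l • x‖ = l * ‖x‖ := by
        rw [norm_smul, Real.norm_eq_abs, abs_of_nonneg hl.1]
      have h2 : Real.cosh ‖l • x‖ ≤ Real.exp ‖l • x‖ := by
        rw [Real.cosh_eq]
        have := Real.exp_le_exp.2 (neg_le_self (norm_nonneg (l • x)))
        linarith
      rw [abs_of_pos (Real.cosh_pos _)]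
      refine h2.trans (Real.exp_le_exp.2 ?_)
      rw [h1]
      exact mul_le_mul_of_nonneg_right hl.2 (norm_nonneg x)
  · -- n ≥ 2
    obtain ⟨m, rfl⟩ : ∃ m, n = m + 1 := ⟨n - 1, by omega⟩
    set S := Metric.sphere (0 : EuclideanSpace ℝ (Fin (m+1))) 1 with hSdef
    have hcast : ((m+1 : ℕ) : ℝ) - 1 = (m : ℝ) := by push_cast; ring
    set μ := (Measure.hausdorffMeasure ((((m+1):ℕ):ℝ) - 1) :
      Measure (EuclideanSpace ℝ (Fin (m+1)))) with hμ
    have hμeq : μ = (μH[(m:ℝ)] : Measure (EuclideanSpace ℝ (Fin (m+1)))) := by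
      rw [hμ, hcast]
    have hfin : μ S < ⊤ := by rw [hμeq]; exact sphere_hausdorff_ne_top m
    have hpos : 0 < μ S := by rw [hμeq]; exact sphere_hausdorff_pos m
    have hSmeas : MeasurableSet S := Metric.isClosed_sphere.measurableSet
    haveI hfm : IsFiniteMeasure (μ.restrict S) :=
      ⟨by rw [Measure.restrict_apply_univ]; exact hfin⟩
    have hYZ : ∀ y : EuclideanSpace ℝ (Fin (m+1)),
        YZphi (m+1) y = ∫ ω in S, Real.exp ((inner ℝ y ω : ℝ)) ∂μ := by
      intro y
      rw [YZphi, if_neg hn1]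
    have hmemnorm : ∀ ω ∈ S, ‖ω‖ = 1 := fun ω hω => mem_sphere_zero_iff_norm.1 hω
    have hInt : ∀ y : EuclideanSpace ℝ (Fin (m+1)),
        IntegrableOn (fun ω => Real.exp ((inner ℝ y ω : ℝ))) S μ := by
      intro y
      apply Integrable.mono' (integrable_const (Real.exp ‖y‖))
      · exact (Real.continuous_exp.comp
          (Continuous.inner continuous_const continuous_id)).aestronglyMeasurable
      · filter_upwards [ae_restrict_mem hSmeas] with ω hω
        rw [Real.norm_eq_abs, abs_of_pos (Real.exp_pos _)]
        apply Real.exp_le_exp.2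
        calc (inner ℝ y ω : ℝ) ≤ ‖y‖ * ‖ω‖ := real_inner_le_norm y ω
          _ = ‖y‖ := by rw [hmemnorm ω hω, mul_one]
      -- integrable_const needs IsFiniteMeasure ✓
    set cY := (μ S).toReal with hcY
    have hcYpos : 0 < cY := ENNReal.toReal_pos hpos.ne' hfin.ne
    refine ⟨cY, hcYpos, ?_, ?_, ?_⟩
    · intro y
      rw [hYZ y]
      have h1 : ∫ _ω in S, Real.exp (-‖y‖) ∂μ = cY * Real.exp (-‖y‖) := by
        rw [setIntegral_const, smul_eq_mul, hcY]; rfl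
      rw [← h1]
      apply setIntegral_mono_on ((integrableOn_const hfin.ne)) (hInt y) hSmeas
      intro ω hω
      apply Real.exp_le_exp.2
      have h2 : (inner ℝ (-y) ω : ℝ) ≤ ‖y‖ := by
        calc (inner ℝ (-y) ω : ℝ) ≤ ‖-y‖ * ‖ω‖ := real_inner_le_norm _ _
          _ = ‖y‖ := by rw [norm_neg, hmemnorm ω hω, mul_one]
      rw [inner_neg_left] at h2
      linarith
    · intro x
      haveI : SFinite (μ.restrict S) := inferInstance
      have hcont : Continuous fun p : ℝ × EuclideanSpace ℝ (Fin (m+1)) =>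
          Real.exp ((inner ℝ (p.1 • x) p.2 : ℝ)) :=
        Real.continuous_exp.comp
          (Continuous.inner (continuous_fst.smul continuous_const) continuous_snd)
      have := (hcont.stronglyMeasurable).integral_prod_right' (ν := μ.restrict S)
      have heq : (fun l : ℝ => YZphi (m+1) (l • x))
          = fun l : ℝ => ∫ ω, Real.exp ((inner ℝ (l • x) ω : ℝ)) ∂(μ.restrict S) := by
        funext l; rw [hYZ]
      rw [heq]
      exact this.measurable
    · intro x lam0 hlam0
      refine ⟨Real.exp (lam0 * ‖x‖) * cY, ?_⟩
      intro l hl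
      rw [hYZ]
      have h1 : ∀ ω ∈ S, ‖Real.exp ((inner ℝ (l • x) ω : ℝ))‖ ≤ Real.exp (lam0 * ‖x‖) := by
        intro ω hω
        rw [Real.norm_eq_abs, abs_of_pos (Real.exp_pos _)]
        apply Real.exp_le_exp.2
        calc (inner ℝ (l • x) ω : ℝ) ≤ ‖l • x‖ * ‖ω‖ := real_inner_le_norm _ _
          _ = l * ‖x‖ := by
              rw [hmemnorm ω hω, mul_one, norm_smul, Real.norm_eq_abs,
                abs_of_nonneg hl.1]
          _ ≤ lam0 * ‖x‖ := mul_le_mul_of_nonneg_right hl.2 (norm_nonneg x)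
      have := norm_setIntegral_le_of_norm_le_const hfin h1
      rw [Real.norm_eq_abs] at this
      exact this.trans (le_of_eq rfl)

end YZ


set_option maxHeartbeats 2000000 in
/-- Lower bound for the auxiliary function `η_q`. -/
theorem etaq_lower_bound
    (n : ℕ) (hn : 1 ≤ n) (k : ℝ) (hk : k ∈ Set.Ico (0:ℝ) 1)
    (lam0 : ℝ) (hlam0 : 0 < lam0) (R : ℝ) (hR : 0 < R)
    (q : ℝ) (hq : -1 < q) :
    ∃ B₁ > (0:ℝ), ∀ s t : ℝ, 1 ≤ s → s ≤ t →
      ∀ x : EuclideanSpace ℝ (Fin n), ‖x‖ ≤ Ak k s + R →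
        B₁ * (s*t) ^ (k/2) * (3 + |Ak k t|)⁻¹ * (3 + |Ak k s|) ^ (-q)
          ≤ etaq n lam0 R k q t s x := by
  obtain ⟨cY, hcY, hYZlow, hYZmeas, hYZbdd⟩ := YZphi_facts n hn
  set c₂ : ℝ := min (3*lam0) (min 1 (3/R)) with hc₂def
  have hc₂ : 0 < c₂ := lt_min (by positivity) (lt_min one_pos (by positivity))
  set B₁ : ℝ := Real.exp (-2) * cY * (2:ℝ)^(-|q|) * c₂^(q+1) / (4*(3*lam0+2)) with hB₁def
  have hB₁ : 0 < B₁ := by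
    apply div_pos
    · exact mul_pos (mul_pos (mul_pos (Real.exp_pos _) hcY)
        (Real.rpow_pos_of_pos two_pos _)) (Real.rpow_pos_of_pos hc₂ _)
    · linarith
  refine ⟨B₁, hB₁, ?_⟩
  intro s t hs hst x hx
  unfold etaq
  set a := Ak k s with ha
  set b := Ak k t with hb
  have ha0 : 0 ≤ a := ha ▸ Ak_nonneg hk hs
  have hab : a ≤ b := by rw [ha, hb]; exact Ak_mono hk hs hst
  have hb0 : 0 ≤ b := le_trans ha0 hab
  have hpts : phik k t - phik k s = b - a := by rw [phik_sub k s t, hb, ha]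
  simp only [hpts]
  have hRa : 0 < a + R := by linarith
  have h3a : (0:ℝ) < 3+a := by linarith
  have h3b : (0:ℝ) < 3+b := by linarith
  set δ : ℝ := min lam0 (a+R)⁻¹ with hδdef
  have hδ : 0 < δ := lt_min hlam0 (by positivity)
  have hδlam0 : δ ≤ lam0 := min_le_left _ _
  have hδaR : δ * (a+R) ≤ 1 := by
    have h1 : δ ≤ (a+R)⁻¹ := min_le_right _ _
    calc δ * (a+R) ≤ (a+R)⁻¹ * (a+R) := mul_le_mul_of_nonneg_right h1 hRa.le
      _ = 1 := inv_mul_cancel₀ hRa.ne'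
  have hδc₂ : c₂ / (3+a) ≤ δ := by
    apply le_min
    · rw [div_le_iff₀ h3a]
      have h1 : c₂ ≤ 3*lam0 := min_le_left _ _
      nlinarith [hlam0, ha0]
    · rw [inv_eq_one_div, div_le_div_iff₀ h3a hRa]
      have hc1 : c₂ ≤ 1 := le_trans (min_le_right _ _) (min_le_left _ _)
      have hc3R : c₂ * R ≤ 3 := by
        have h2 : c₂ ≤ 3/R := le_trans (min_le_right _ _) (min_le_right _ _)
        rw [le_div_iff₀ hR] at h2
        exact h2
      nlinarith [mul_le_mul_of_nonneg_right hc1 ha0]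
  obtain ⟨M, hM⟩ := hYZbdd x lam0 hlam0.le
  set f : ℝ → ℝ := fun l =>
    Real.exp (-(l*(b+R))) * sinhc (l*(b-a)) * YZphi n (l • x) * l^q with hfdef
  have hf0 : ∀ l ∈ Set.Icc (0:ℝ) lam0, 0 ≤ f l := by
    intro l hl
    have h1 : (0:ℝ) ≤ Real.exp (-(l*(b+R))) := (Real.exp_pos _).le
    have h2 : 0 ≤ sinhc (l*(b-a)) := sinhc_nonneg (mul_nonneg hl.1 (by linarith))
    have h3 : 0 ≤ YZphi n (l • x) :=
      le_trans (mul_nonneg hcY.le (Real.exp_pos _).le) (hYZlow (l • x))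
    have h4 : 0 ≤ l^q := Real.rpow_nonneg hl.1 q
    exact mul_nonneg (mul_nonneg (mul_nonneg h1 h2) h3) h4
  have hfmeas : Measurable f := by
    refine ((((Real.measurable_exp.comp ((measurable_id.mul_const (b+R)).neg)).mul
      (measurable_sinhc.comp (measurable_id.mul_const (b-a)))).mul
        (hYZmeas x)).mul ?_)
    measurability
  have hfint : IntervalIntegrable f volume 0 lam0 := by
    rw [intervalIntegrable_iff, Set.uIoc_of_le hlam0.le]
    have hrint : IntegrableOn (fun l : ℝ => l ^ q) (Set.Ioc 0 lam0) volume := by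
      have h0 := intervalIntegral.intervalIntegrable_rpow' (a := 0) (b := lam0) hq
      rwa [intervalIntegrable_iff, Set.uIoc_of_le hlam0.le] at h0
    apply Integrable.mono' (hrint.const_mul (Real.exp (lam0*(b-a)) * M))
    · exact hfmeas.aestronglyMeasurable
    · filter_upwards [ae_restrict_mem measurableSet_Ioc] with l hl
      rw [Real.norm_of_nonneg (hf0 l ⟨hl.1.le, hl.2⟩)]
      have hlb : 0 ≤ l*(b-a) := mul_nonneg hl.1.le (by linarith)
      have hE : Real.exp (-(l*(b+R))) ≤ 1 := by
        rw [Real.exp_le_one_iff]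
        have : 0 ≤ l*(b+R) := mul_nonneg hl.1.le (by linarith)
        linarith
      have hS : sinhc (l*(b-a)) ≤ Real.exp (lam0*(b-a)) := by
        refine (sinhc_le_exp hlb).trans (Real.exp_le_exp.2 ?_)
        exact mul_le_mul_of_nonneg_right hl.2 (by linarith)
      have hSn : 0 ≤ sinhc (l*(b-a)) := sinhc_nonneg hlb
      have hY : YZphi n (l • x) ≤ M := le_trans (le_abs_self _) (hM l ⟨hl.1.le, hl.2⟩)
      have hYn : 0 ≤ YZphi n (l • x) :=
        le_trans (mul_nonneg hcY.le (Real.exp_pos _).le) (hYZlow (l • x))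
      have step : Real.exp (-(l*(b+R))) * sinhc (l*(b-a)) * YZphi n (l • x)
          ≤ Real.exp (lam0*(b-a)) * M := by
        have t1 : Real.exp (-(l*(b+R))) * sinhc (l*(b-a)) ≤ 1 * Real.exp (lam0*(b-a)) :=
          mul_le_mul hE hS hSn zero_le_one
        rw [one_mul] at t1
        exact mul_le_mul t1 hY hYn (Real.exp_pos _).le
      exact mul_le_mul_of_nonneg_right step (Real.rpow_nonneg hl.1.le q)
  have hsub1 : IntervalIntegrable f volume 0 (δ/2) := hfint.mono_set (by
    rw [Set.uIcc_of_le (by linarith : (0:ℝ) ≤ δ/2), Set.uIcc_of_le hlam0.le]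
    exact Set.Icc_subset_Icc (le_refl 0) (by linarith))
  have hsub2 : IntervalIntegrable f volume (δ/2) δ := hfint.mono_set (by
    rw [Set.uIcc_of_le (by linarith : δ/2 ≤ δ), Set.uIcc_of_le hlam0.le]
    exact Set.Icc_subset_Icc (by linarith) (by linarith))
  have hsub3 : IntervalIntegrable f volume δ lam0 := hfint.mono_set (by
    rw [Set.uIcc_of_le hδlam0, Set.uIcc_of_le hlam0.le]
    exact Set.Icc_subset_Icc (by linarith) (le_refl _))
  have hsplit1 := intervalIntegral.integral_add_adjacent_intervals hsub1 hsub2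
  have hsplit2 := intervalIntegral.integral_add_adjacent_intervals (hsub1.trans hsub2) hsub3
  set X : ℝ := Real.exp (-1) * ((3+a) / (2*(3*lam0+2)*(3+b))) with hX
  set LB : ℝ := X * (cY * Real.exp (-1)) * ((2:ℝ)^(-|q|) * δ^q) with hLB
  have hDen : (0:ℝ) < 2*(3*lam0+2)*(3+b) := by nlinarith [hlam0]
  have hpoint : ∀ l ∈ Set.Icc (δ/2) δ, LB ≤ f l := by
    intro l hl
    have hl0 : 0 < l := lt_of_lt_of_le (by linarith) hl.1
    have hl2 : l ≤ δ := hl.2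
    have hlb : 0 ≤ l*(b-a) := mul_nonneg hl0.le (by linarith)
    have h1 : Real.exp (-(l*(a+R))) / (2*(1+l*(b-a)))
        ≤ Real.exp (-(l*(b+R))) * sinhc (l*(b-a)) := by
      have h2 := exp_div_le_sinhc hlb
      have h3 : Real.exp (-(l*(b+R))) * (Real.exp (l*(b-a)) / (2*(1+l*(b-a))))
          ≤ Real.exp (-(l*(b+R))) * sinhc (l*(b-a)) :=
        mul_le_mul_of_nonneg_left h2 (Real.exp_pos _).le
      refine le_trans (le_of_eq ?_) h3
      rw [mul_div_assoc', ← Real.exp_add]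
      congr 2
      ring
    have h4 : X ≤ Real.exp (-(l*(a+R))) / (2*(1+l*(b-a))) := by
      rw [hX, mul_div_assoc']
      have hden2 : (0:ℝ) < 2*(1+l*(b-a)) := by nlinarith [hlb]
      rw [div_le_div_iff₀ hDen hden2]
      have hE : Real.exp (-1) ≤ Real.exp (-(l*(a+R))) := by
        apply Real.exp_le_exp.2
        have h5 : l*(a+R) ≤ δ*(a+R) := mul_le_mul_of_nonneg_right hl2 hRa.le
        linarith [hδaR]
      have hK : (3+a)*(1+l*(b-a)) ≤ (3*lam0+2)*(3+b) := by
        have hlc : l*(b-a) ≤ δ*b := by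
          have e1 : l*(b-a) ≤ δ*(b-a) := mul_le_mul_of_nonneg_right hl2 (by linarith)
          have e2 : δ*(b-a) ≤ δ*b := mul_le_mul_of_nonneg_left (by linarith) hδ.le
          linarith
        have h3aδ : (3+a)*δ ≤ 3*lam0+1 := by
          have e1 : a*δ ≤ δ*(a+R) := by nlinarith [hδ.le, hR.le]
          nlinarith [hδlam0, hδaR, hδ.le]
        nlinarith [mul_le_mul_of_nonneg_left hlc (le_of_lt h3a),
          mul_le_mul_of_nonneg_right h3aδ hb0, hab, hb0, hlam0]
      nlinarith [mul_le_mul_of_nonneg_left hK (Real.exp_pos (-1)).le,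
        mul_le_mul_of_nonneg_right hE (le_of_lt (by nlinarith [hlam0] : (0:ℝ) < (3*lam0+2)*(3+b)))]
    have hY : cY * Real.exp (-1) ≤ YZphi n (l • x) := by
      have h5 := hYZlow (l • x)
      have h6 : ‖l • x‖ ≤ 1 := by
        rw [norm_smul, Real.norm_eq_abs, abs_of_nonneg hl0.le]
        have h7 : l * ‖x‖ ≤ δ*(a+R) := mul_le_mul hl2 hx (norm_nonneg x) hδ.le
        linarith [hδaR]
      have h7 : Real.exp (-1) ≤ Real.exp (-‖l • x‖) := Real.exp_le_exp.2 (by linarith)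
      calc cY * Real.exp (-1) ≤ cY * Real.exp (-‖l • x‖) :=
            mul_le_mul_of_nonneg_left h7 hcY.le
        _ ≤ YZphi n (l • x) := h5
    have hP : (2:ℝ)^(-|q|) * δ^q ≤ l^q := by
      rcases le_or_gt 0 q with hq0 | hq0
      · rw [abs_of_nonneg hq0]
        have e1 : (2:ℝ)^(-q) * δ^q = (δ/2)^q := by
          rw [Real.div_rpow hδ.le (by norm_num : (0:ℝ) ≤ 2), Real.rpow_neg (by norm_num : (0:ℝ) ≤ 2)]
          ring
        rw [e1]
        exact Real.rpow_le_rpow (by positivity) hl.1 hq0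
      · rw [abs_of_neg hq0, neg_neg]
        have e1 : (2:ℝ)^q ≤ 1 := Real.rpow_le_one_of_one_le_of_nonpos (by norm_num) hq0.le
        have e2 : δ^q ≤ l^q := Real.rpow_le_rpow_of_nonpos hl0 hl2 hq0.le
        nlinarith [mul_le_mul_of_nonneg_right e1 (Real.rpow_nonneg hδ.le q), e2]
    have hESnn : 0 ≤ Real.exp (-(l*(b+R))) * sinhc (l*(b-a)) :=
      mul_nonneg (Real.exp_pos _).le (sinhc_nonneg hlb)
    have hYnn : 0 ≤ YZphi n (l • x) :=
      le_trans (mul_nonneg hcY.le (Real.exp_pos _).le) hY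
    have hXES : X ≤ Real.exp (-(l*(b+R))) * sinhc (l*(b-a)) := le_trans h4 h1
    have hcYe : (0:ℝ) ≤ cY * Real.exp (-1) := mul_nonneg hcY.le (Real.exp_pos _).le
    have hPnn : (0:ℝ) ≤ (2:ℝ)^(-|q|) * δ^q :=
      mul_nonneg (Real.rpow_nonneg (by norm_num) _) (Real.rpow_nonneg hδ.le _)
    calc LB = X * (cY * Real.exp (-1)) * ((2:ℝ)^(-|q|) * δ^q) := hLB
      _ ≤ (Real.exp (-(l*(b+R))) * sinhc (l*(b-a)) * YZphi n (l • x)) * l^q := by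
          apply mul_le_mul _ hP hPnn (mul_nonneg hESnn hYnn)
          exact mul_le_mul hXES hY hcYe hESnn
      _ = f l := rfl
  have hmid : LB * (δ/2) ≤ ∫ l in (δ/2)..δ, f l := by
    have h1 := intervalIntegral.integral_mono_on (by linarith : δ/2 ≤ δ)
      intervalIntegrable_const hsub2 hpoint
    rw [intervalIntegral.integral_const, smul_eq_mul] at h1
    calc LB * (δ/2) = (δ - δ/2) * LB := by ring
      _ ≤ _ := h1
  have htotal : ∫ l in (δ/2)..δ, f l ≤ ∫ l in (0:ℝ)..lam0, f l := by
    have hnn1 : 0 ≤ ∫ l in (0:ℝ)..(δ/2), f l :=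
      intervalIntegral.integral_nonneg (by linarith)
        (fun u hu => hf0 u ⟨hu.1, le_trans hu.2 (by linarith)⟩)
    have hnn3 : 0 ≤ ∫ l in δ..lam0, f l :=
      intervalIntegral.integral_nonneg hδlam0
        (fun u hu => hf0 u ⟨le_trans hδ.le hu.1, hu.2⟩)
    linarith [hsplit1, hsplit2]
  have hC2 : (0:ℝ) < Real.exp (-2) * cY * (2:ℝ)^(-|q|) / (4*(3*lam0+2)) := by
    apply div_pos
    · exact mul_pos (mul_pos (Real.exp_pos _) hcY) (Real.rpow_pos_of_pos two_pos _)
    · linarith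
  have hkey : B₁ * (3+b)⁻¹ * (3+a)^(-q) ≤ LB * (δ/2) := by
    have hq1 : (0:ℝ) ≤ q+1 := by linarith
    have hd1 : (c₂/(3+a))^(q+1) ≤ δ^(q+1) := Real.rpow_le_rpow (by positivity) hδc₂ hq1
    have hd2 : (c₂/(3+a))^(q+1) = c₂^(q+1) / (3+a)^(q+1) := Real.div_rpow hc₂.le h3a.le _
    have hd3 : (3+a)^((q:ℝ)+1) = (3+a)^q * (3+a) := Real.rpow_add_one h3a.ne' q
    have hd4 : (3+a)^(-q) = ((3+a)^q)⁻¹ := Real.rpow_neg h3a.le q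
    have hδq : δ^((q:ℝ)+1) = δ^q * δ := Real.rpow_add_one hδ.ne' q
    have hexp2 : Real.exp (-2:ℝ) = Real.exp (-1) * Real.exp (-1) := by
      rw [← Real.exp_add]; norm_num
    have hgq : (0:ℝ) < (3+a)^q := Real.rpow_pos_of_pos h3a q
    calc B₁ * (3+b)⁻¹ * (3+a)^(-q)
        = (Real.exp (-2) * cY * (2:ℝ)^(-|q|) / (4*(3*lam0+2)))
            * ((3+a) * (3+b)⁻¹ * (c₂^(q+1)/((3+a)^q*(3+a)))) := by
          rw [hB₁def, hd4]
          field_simp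
      _ = (Real.exp (-2) * cY * (2:ℝ)^(-|q|) / (4*(3*lam0+2)))
            * ((3+a) * (3+b)⁻¹ * (c₂/(3+a))^(q+1)) := by
          rw [hd2, hd3]
      _ ≤ (Real.exp (-2) * cY * (2:ℝ)^(-|q|) / (4*(3*lam0+2)))
            * ((3+a) * (3+b)⁻¹ * δ^(q+1)) := by
          apply mul_le_mul_of_nonneg_left _ hC2.le
          apply mul_le_mul_of_nonneg_left hd1
          exact mul_nonneg h3a.le (inv_nonneg.2 h3b.le)
      _ = LB * (δ/2) := by
          rw [hLB, hX, hδq, hexp2]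
          field_simp
          ring
  have hfinal : B₁ * (3+b)⁻¹ * (3+a)^(-q) ≤ ∫ l in (0:ℝ)..lam0, f l :=
    le_trans hkey (le_trans hmid htotal)
  have hstnn : (0:ℝ) ≤ (s*t)^(k/2) := Real.rpow_nonneg (by nlinarith) _
  rw [abs_of_nonneg ha0, abs_of_nonneg hb0]
  calc B₁ * (s*t)^(k/2) * (3+b)⁻¹ * (3+a)^(-q)
      = (s*t)^(k/2) * (B₁ * (3+b)⁻¹ * (3+a)^(-q)) := by ring
    _ ≤ (s*t)^(k/2) * ∫ l in (0:ℝ)..lam0, f l :=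
        mul_le_mul_of_nonneg_left hfinal hstnn
end

section
/- Let k ∈ [0,1), λ > 0 and s ≥ 1. Let h : [s,∞) → ℝ be continuous with h(t) ≥ 0 for all t ≥ s. If w : [s,∞) → ℝ is twice continuously differentiable with w''(t) − λ² t^{−2k} w(t) = h(t) for all t ≥ s and w(s) = 0, w'(s) = 0, then w(t) ≥ 0 for all t ≥ s. -/
/-!
Perturb `w` by `ε e^{λ(t-s)}`. Since `t^{-2k} ≤ 1` on `[s, ∞)`, the exponential satisfies
`φ'' ≥ λ² t^{-2k} φ`, so the perturbed function `G` has `G(s) > 0`, `G'(s) > 0`, and is convex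
wherever it is positive. Before its first zero `G` is therefore increasing, so it has no zero at
all; letting `ε → 0` gives `w ≥ 0`.
-/

open Real Set

lemma monotoneOn_Icc_of_hasDerivAt_nonneg {f f' : ℝ → ℝ} {a b : ℝ}
    (hf : ∀ x ∈ Icc a b, HasDerivAt f (f' x) x) (hf'₀ : ∀ x ∈ Ioo a b, 0 ≤ f' x) :
    MonotoneOn f (Icc a b) := by
  refine monotoneOn_of_hasDerivWithinAt_nonneg (f' := f') (convex_Icc a b)
    (fun x hx => (hf x hx).continuousAt.continuousWithinAt) (fun x hx => ?_) ?_
  · rw [interior_Icc] at hx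
    exact (hf x (Ioo_subset_Icc_self hx)).hasDerivWithinAt
  · simpa only [interior_Icc] using hf'₀

lemma monotoneOn_Icc_of_deriv2_nonneg {f f' f'' : ℝ → ℝ} {a b : ℝ}
    (hf : ∀ x ∈ Icc a b, HasDerivAt f (f' x) x) (hf' : ∀ x ∈ Icc a b, HasDerivAt f' (f'' x) x)
    (hf''₀ : ∀ x ∈ Ioo a b, 0 ≤ f'' x) (ha : 0 ≤ f' a) :
    MonotoneOn f (Icc a b) := by
  have hmono' := monotoneOn_Icc_of_hasDerivAt_nonneg hf' hf''₀
  refine monotoneOn_Icc_of_hasDerivAt_nonneg hf fun x hx => ?_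
  exact ha.trans <| hmono' (left_mem_Icc.2 (hx.1.trans hx.2).le) (Ioo_subset_Icc_self hx) hx.1.le

lemma pos_of_deriv2_nonneg_where_pos {f f' f'' : ℝ → ℝ} {s : ℝ}
    (hf : ∀ t, s ≤ t → HasDerivAt f (f' t) t) (hf' : ∀ t, s ≤ t → HasDerivAt f' (f'' t) t)
    (hf''₀ : ∀ t, s < t → 0 < f t → 0 ≤ f'' t) (hs : 0 < f s) (hs' : 0 ≤ f' s) :
    ∀ t, s ≤ t → 0 < f t := by
  intro t hst
  by_contra! hft
  have hcont : ContinuousOn f (Icc s t) := fun x hx => (hf x hx.1).continuousAt.continuousWithinAt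
  have hzeros : IsCompact (Icc s t ∩ f ⁻¹' Iic 0) := isCompact_Icc.of_isClosed_subset
    (hcont.preimage_isClosed_of_isClosed isClosed_Icc isClosed_Iic) inter_subset_left
  obtain ⟨T, ⟨⟨hsT, hTt⟩, hfT⟩, hTmin⟩ := hzeros.exists_isLeast ⟨t, right_mem_Icc.2 hst, hft⟩
  have hpos : ∀ x ∈ Ico s T, 0 < f x := fun x hx => by
    by_contra! hfx
    exact (hTmin ⟨⟨hx.1, hx.2.le.trans hTt⟩, hfx⟩).not_gt hx.2
  have hmono : MonotoneOn f (Icc s T) :=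
    monotoneOn_Icc_of_deriv2_nonneg (fun x hx => hf x hx.1) (fun x hx => hf' x hx.1)
      (fun x hx => hf''₀ x hx.1 (hpos x (Ioo_subset_Ico_self hx))) hs'
  exact (hs.trans_le (hmono (left_mem_Icc.2 hsT) (right_mem_Icc.2 hsT) hsT)).not_ge hfT

theorem minimum_principle_general
    (k : ℝ) (hk : k ∈ Set.Ico (0:ℝ) 1) (lam : ℝ) (hlam : 0 < lam)
    (s : ℝ) (hs : 1 ≤ s)
    (h w : ℝ → ℝ)
    (hhnn : ∀ t : ℝ, s ≤ t → 0 ≤ h t)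
    (hwd : ∀ t : ℝ, s ≤ t → DifferentiableAt ℝ w t)
    (hwd2 : ∀ t : ℝ, s ≤ t → DifferentiableAt ℝ (deriv w) t)
    (hode : ∀ t : ℝ, s ≤ t → deriv (deriv w) t - lam^2 * t ^ (-(2*k)) * w t = h t)
    (hw0 : w s = 0) (hw0' : deriv w s = 0) :
    ∀ t : ℝ, s ≤ t → 0 ≤ w t := by
  have hexp (c t : ℝ) :
      HasDerivAt (fun r => c * exp (lam * (r - s))) (c * lam * exp (lam * (t - s))) t := by
    refine ((((hasDerivAt_id' t).sub_const s).const_mul lam).exp.const_mul c).congr_deriv ?_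
    ring
  have hperturbed (ε : ℝ) (hε : 0 < ε) (t : ℝ) (ht : s ≤ t) :
      0 < w t + ε * exp (lam * (t - s)) := by
    refine pos_of_deriv2_nonneg_where_pos (f := fun t => w t + ε * exp (lam * (t - s)))
      (fun t ht => (hwd t ht).hasDerivAt.add (hexp ε t))
      (fun t ht => (hwd2 t ht).hasDerivAt.add (hexp (ε * lam) t)) (fun t hst hGt => ?_)
      (by simpa [hw0] using hε) (by simpa [hw0'] using (mul_pos hε hlam).le) t ht
    have hp₀ : 0 ≤ t ^ (-(2 * k)) := rpow_nonneg (by linarith) _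
    have hp₁ : t ^ (-(2 * k)) ≤ 1 :=
      rpow_le_one_of_one_le_of_nonpos (by linarith) (by linarith [hk.1])
    have hG'' : deriv (deriv w) t + ε * lam * lam * exp (lam * (t - s)) =
        h t + lam ^ 2 * t ^ (-(2 * k)) * (w t + ε * exp (lam * (t - s))) +
          lam ^ 2 * (1 - t ^ (-(2 * k))) * (ε * exp (lam * (t - s))) := by
      linear_combination hode t hst.le
    rw [hG'']
    exact add_nonneg (add_nonneg (hhnn t hst.le) (mul_nonneg (by positivity) hGt.le))
      (mul_nonneg (mul_nonneg (sq_nonneg lam) (sub_nonneg.2 hp₁)) (by positivity))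
  intro t ht
  refine le_of_forall_pos_lt_add fun δ hδ => ?_
  simpa [div_mul_cancel₀ _ (exp_pos _).ne'] using
    hperturbed (δ / exp (lam * (t - s))) (div_pos hδ (exp_pos _)) t ht

/-- Minimum-type principle for the operator `∂_t² - λ² t^(-2k)` on `[s,∞)`:
a supersolution with trivial data at `s` is nonnegative. -/
theorem minimum_principle
    (k : ℝ) (hk : k ∈ Set.Ico (0:ℝ) 1) (lam : ℝ) (hlam : 0 < lam)
    (s : ℝ) (hs : 1 ≤ s)
    (h w : ℝ → ℝ)
    (hhcont : ContinuousOn h (Set.Ici s))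
    (hhnn : ∀ t : ℝ, s ≤ t → 0 ≤ h t)
    (hwd : ∀ t : ℝ, s ≤ t → DifferentiableAt ℝ w t)
    (hwd2 : ∀ t : ℝ, s ≤ t → DifferentiableAt ℝ (deriv w) t)
    (hwc2 : ContinuousOn (deriv (deriv w)) (Set.Ici s))
    (hode : ∀ t : ℝ, s ≤ t → deriv (deriv w) t - lam^2 * t ^ (-(2*k)) * w t = h t)
    (hw0 : w s = 0) (hw0' : deriv w s = 0) :
    ∀ t : ℝ, s ≤ t → 0 ≤ w t :=
  minimum_principle_general k hk lam hlam s hs h w hhnn hwd hwd2 hode hw0 hw0'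
end

section
/- Fix λ > 0 and s ≥ 1, and define y₀ : [s,∞) → ℝ by y₀(t) = (t/s)^{1/3} cosh(3λ(t^{1/3} − s^{1/3})) − (1/(3λ s^{1/3})) sinh(3λ(t^{1/3} − s^{1/3})). Then y₀ is twice differentiable and satisfies y₀''(t) = λ² t^{−4/3} y₀(t) for all t ≥ s, together with the initial conditions y₀(s) = 1 and y₀'(s) = 0. -/
open Real

/-- Explicit solution `y₀(t) = (t/s)^(1/3) cosh(3λ(t^(1/3)-s^(1/3)))
- (1/(3λ s^(1/3))) sinh(3λ(t^(1/3)-s^(1/3)))` of the Einstein–de Sitter ODE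
`y'' = λ² t^(-4/3) y` with data `(1,0)` at time `s`. -/
theorem explicit_y0_EdeS
    (lam s : ℝ) (hlam : 0 < lam) (hs : 1 ≤ s)
    (y₀ : ℝ → ℝ)
    (hy₀ : ∀ t : ℝ, y₀ t =
      (t/s) ^ ((1:ℝ)/3) * Real.cosh (3*lam*(t ^ ((1:ℝ)/3) - s ^ ((1:ℝ)/3)))
        - (1/(3*lam*s ^ ((1:ℝ)/3))) * Real.sinh (3*lam*(t ^ ((1:ℝ)/3) - s ^ ((1:ℝ)/3)))) :
    (∀ t : ℝ, s ≤ t → DifferentiableAt ℝ y₀ t) ∧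
    (∀ t : ℝ, s ≤ t → DifferentiableAt ℝ (deriv y₀) t) ∧
    (∀ t : ℝ, s ≤ t → deriv (deriv y₀) t = lam^2 * t ^ (-(4:ℝ)/3) * y₀ t) ∧
    y₀ s = 1 ∧ deriv y₀ s = 0 := by
  have hs0 : (0:ℝ) < s := lt_of_lt_of_le one_pos hs
  set c : ℝ := s ^ ((1:ℝ)/3) with hc_def
  have hc : 0 < c := Real.rpow_pos_of_pos hs0 _
  set F : ℝ → ℝ := fun t =>
    (lam/c) * t ^ (-(1:ℝ)/3) * Real.sinh (3*lam*(t ^ ((1:ℝ)/3) - c)) with hF_def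
  -- first derivative
  have key : ∀ t : ℝ, 0 < t → HasDerivAt y₀ (F t) t := by
    intro t ht
    have hu : HasDerivAt (fun x : ℝ => x ^ ((1:ℝ)/3))
        ((1:ℝ)/3 * t ^ ((1:ℝ)/3 - 1)) t :=
      Real.hasDerivAt_rpow_const (Or.inl ht.ne')
    have hA : HasDerivAt (fun x : ℝ => 3*lam*(x ^ ((1:ℝ)/3) - c))
        (3*lam*((1:ℝ)/3 * t ^ ((1:ℝ)/3 - 1))) t :=
      (hu.sub_const c).const_mul (3*lam)
    have hg : HasDerivAt (fun x : ℝ =>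
        x ^ ((1:ℝ)/3) / c * Real.cosh (3*lam*(x ^ ((1:ℝ)/3) - c))
          - (1/(3*lam*c)) * Real.sinh (3*lam*(x ^ ((1:ℝ)/3) - c)))
        ((1:ℝ)/3 * t ^ ((1:ℝ)/3 - 1) / c * Real.cosh (3*lam*(t ^ ((1:ℝ)/3) - c))
          + t ^ ((1:ℝ)/3) / c *
            (Real.sinh (3*lam*(t ^ ((1:ℝ)/3) - c)) * (3*lam*((1:ℝ)/3 * t ^ ((1:ℝ)/3 - 1))))
          - (1/(3*lam*c)) *
            (Real.cosh (3*lam*(t ^ ((1:ℝ)/3) - c)) * (3*lam*((1:ℝ)/3 * t ^ ((1:ℝ)/3 - 1))))) t :=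
      ((hu.div_const c).mul hA.cosh).sub (hA.sinh.const_mul _)
    have heq : y₀ =ᶠ[nhds t] (fun x : ℝ =>
        x ^ ((1:ℝ)/3) / c * Real.cosh (3*lam*(x ^ ((1:ℝ)/3) - c))
          - (1/(3*lam*c)) * Real.sinh (3*lam*(x ^ ((1:ℝ)/3) - c))) := by
      filter_upwards [eventually_gt_nhds ht] with x hx
      rw [hy₀ x, Real.div_rpow hx.le hs0.le]
    have hval : (1:ℝ)/3 * t ^ ((1:ℝ)/3 - 1) / c * Real.cosh (3*lam*(t ^ ((1:ℝ)/3) - c))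
          + t ^ ((1:ℝ)/3) / c *
            (Real.sinh (3*lam*(t ^ ((1:ℝ)/3) - c)) * (3*lam*((1:ℝ)/3 * t ^ ((1:ℝ)/3 - 1))))
          - (1/(3*lam*c)) *
            (Real.cosh (3*lam*(t ^ ((1:ℝ)/3) - c)) * (3*lam*((1:ℝ)/3 * t ^ ((1:ℝ)/3 - 1))))
        = F t := by
      have hne : t ^ ((1:ℝ)/3) ≠ 0 := (Real.rpow_pos_of_pos ht _).ne'
      have h1 : t ^ ((1:ℝ)/3 - 1) = t ^ (-(1:ℝ)/3) / t ^ ((1:ℝ)/3) := by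
        rw [eq_div_iff hne, ← Real.rpow_add ht]; norm_num
      rw [hF_def, h1]
      field_simp
      ring
    exact (hval ▸ hg).congr_of_eventuallyEq heq
  -- second derivative
  have key2 : ∀ t : ℝ, 0 < t → HasDerivAt F
      ((lam/c) * ((-(1:ℝ)/3) * t ^ (-(1:ℝ)/3 - 1)) * Real.sinh (3*lam*(t ^ ((1:ℝ)/3) - c))
        + (lam/c) * t ^ (-(1:ℝ)/3) *
          (Real.cosh (3*lam*(t ^ ((1:ℝ)/3) - c)) * (3*lam*((1:ℝ)/3 * t ^ ((1:ℝ)/3 - 1))))) t := by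
    intro t ht
    have hu : HasDerivAt (fun x : ℝ => x ^ ((1:ℝ)/3))
        ((1:ℝ)/3 * t ^ ((1:ℝ)/3 - 1)) t :=
      Real.hasDerivAt_rpow_const (Or.inl ht.ne')
    have hv : HasDerivAt (fun x : ℝ => x ^ (-(1:ℝ)/3))
        ((-(1:ℝ)/3) * t ^ (-(1:ℝ)/3 - 1)) t :=
      Real.hasDerivAt_rpow_const (Or.inl ht.ne')
    have hA : HasDerivAt (fun x : ℝ => 3*lam*(x ^ ((1:ℝ)/3) - c))
        (3*lam*((1:ℝ)/3 * t ^ ((1:ℝ)/3 - 1))) t :=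
      (hu.sub_const c).const_mul (3*lam)
    exact ((hv.const_mul (lam/c)).mul hA.sinh)
  refine ⟨fun t ht => (key t (lt_of_lt_of_le hs0 ht)).differentiableAt, ?_, ?_, ?_, ?_⟩
  · intro t ht
    have ht0 : 0 < t := lt_of_lt_of_le hs0 ht
    have heq : deriv y₀ =ᶠ[nhds t] F := by
      filter_upwards [eventually_gt_nhds ht0] with x hx
      exact (key x hx).deriv
    exact ((key2 t ht0).congr_of_eventuallyEq heq).differentiableAt
  · intro t ht
    have ht0 : 0 < t := lt_of_lt_of_le hs0 ht
    have heq : deriv y₀ =ᶠ[nhds t] F := by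
      filter_upwards [eventually_gt_nhds ht0] with x hx
      exact (key x hx).deriv
    have h2 := ((key2 t ht0).congr_of_eventuallyEq heq).deriv
    rw [h2, hy₀ t, Real.div_rpow ht0.le hs0.le]
    have e1 : t ^ (-(1:ℝ)/3) * t ^ ((1:ℝ)/3 - 1) = t ^ (-(1:ℝ)) := by
      rw [← Real.rpow_add ht0]; norm_num
    have e2 : t ^ (-(4:ℝ)/3) * t ^ ((1:ℝ)/3) = t ^ (-(1:ℝ)) := by
      rw [← Real.rpow_add ht0]; norm_num
    have e3 : t ^ (-(1:ℝ)/3 - 1) = t ^ (-(4:ℝ)/3) := by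
      rw [show (-(1:ℝ)/3 - 1) = -(4:ℝ)/3 by norm_num]
    rw [e3]
    linear_combination (lam^2/c * Real.cosh (3*lam*(t ^ ((1:ℝ)/3) - c))) * e1
      - (lam^2/c * Real.cosh (3*lam*(t ^ ((1:ℝ)/3) - c))) * e2
      + (lam/c * t ^ (-(4:ℝ)/3) * Real.sinh (3*lam*(t ^ ((1:ℝ)/3) - c)) / 3) *
        (mul_inv_cancel₀ hlam.ne')
  · have h0 : s ^ ((1:ℝ)/3) - c = 0 := by rw [hc_def]; exact sub_self _
    rw [hy₀ s, div_self hs0.ne', h0]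
    simp
  · have h0 : s ^ ((1:ℝ)/3) - c = 0 := by rw [hc_def]; exact sub_self _
    rw [(key s hs0).deriv]
    show lam / c * s ^ (-(1:ℝ)/3) * Real.sinh (3*lam*(s ^ ((1:ℝ)/3) - c)) = 0
    rw [h0]
    simp
end
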